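/- arXiv:2008.00097 — 7 statements merged into one kernel-verified Lean document; each statement's English description precedes it below -/
import Mathlib

section
/- Let T ≥ 0, let ρ : {0,…,T} → ℝ be a finite real sequence, and let N ≥ 2 be the number of time steps contained in the interval [0,b]. Define the stlcg recursion for ◊_{[0,b]}: the hidden state h_i ∈ ℝ^{N−1} is initialized with every entry equal to ρ_T; at step i the output is o_{T−i} = max(h_{i,1},…,h_{i,N−1}, ρ_{T−i}), and the next hidden state is the shift h_{i+1} = (h_{i,2},…,h_{i,N−1}, ρ_{T−i}). Then for every index j with 0 ≤ j ≤ T, o_j = max_{j ≤ k ≤ j+N−1} ρ_{min(k,T)}, i.e., the recursion computes the sliding-window maximum of length N with last-value padding, which is the robustness ρ(s_{t_j}, ◊_{[0,b]} φ) under the convention that the trace is padded with its final value beyond index T. -/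
/-- Correctness of the `stlcg` recursion for `◊_{[0,b]}` with `N ≥ 2` time steps in
`[0,b]`. The hidden state `h i` is a vector with entries indexed `1,…,N-1`, initialized
to `ρ T`; at step `i` the output is `o (T-i) = max (max_{1≤k≤N-1} h i k) (ρ (T-i))` and
the hidden state is shifted with `ρ (T-i)` entering at the end. Then for every `j ≤ T`,
`o j` equals the sliding-window maximum `max_{j ≤ k ≤ j+N-1} ρ (min k T)` of length `N`
with last-value padding, i.e. the robustness `ρ(s_{t_j}, ◊_{[0,b]} φ)`. -/
theorem stlcg_eventually_bounded (T N : ℕ) (hN : 2 ≤ N) (ρ o : ℕ → ℝ) (h : ℕ → ℕ → ℝ)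
    (hinit : ∀ k, 1 ≤ k → k ≤ N - 1 → h 0 k = ρ T)
    (hout : ∀ i, i ≤ T →
      o (T - i) = max ((Finset.Icc 1 (N - 1)).sup' (Finset.nonempty_Icc.mpr (by omega)) (h i))
        (ρ (T - i)))
    (hshift : ∀ i, i ≤ T → ∀ k, 1 ≤ k → k ≤ N - 2 → h (i + 1) k = h i (k + 1))
    (hlast : ∀ i, i ≤ T → h (i + 1) (N - 1) = ρ (T - i)) :
    ∀ j, j ≤ T →
      o j = (Finset.Icc j (j + N - 1)).sup' (Finset.nonempty_Icc.mpr (by omega))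
        (fun k => ρ (min k T)) := by
  have inv : ∀ i, i ≤ T → ∀ k, 1 ≤ k → k ≤ N - 1 →
      h i k = ρ (min (T - i + (N - k)) T) := by
    intro i
    induction i with
    | zero =>
      intro _ k hk1 hk2
      rw [hinit k hk1 hk2]
      congr 1
      omega
    | succ i ih =>
      intro hi k hk1 hk2
      have hi' : i ≤ T := by omega
      by_cases hk : k = N - 1
      · subst hk
        rw [hlast i hi']
        congr 1
        omega
      · have hk2' : k ≤ N - 2 := by omega
        rw [hshift i hi' k hk1 hk2', ih hi' (k + 1) (by omega) (by omega)]
        congr 1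
        omega
  intro j hj
  have hi : T - j ≤ T := Nat.sub_le T j
  have hTj : T - (T - j) = j := by omega
  have ho := hout (T - j) hi
  rw [hTj] at ho
  rw [ho]
  apply le_antisymm
  · apply max_le
    · apply Finset.sup'_le
      intro k hk
      simp only [Finset.mem_Icc] at hk
      have hinv := inv (T - j) hi k hk.1 hk.2
      rw [hTj] at hinv
      rw [hinv]
      exact Finset.le_sup' (fun m => ρ (min m T)) (Finset.mem_Icc.mpr ⟨by omega, by omega⟩)
    · have hmin : ρ j = (fun m => ρ (min m T)) j := by
        simp [min_eq_left hj]
      rw [hmin]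
      have hjmem : j ∈ Finset.Icc j (j + N - 1) := Finset.mem_Icc.mpr ⟨le_rfl, by omega⟩
      exact Finset.le_sup' (fun m => ρ (min m T)) hjmem
  · apply Finset.sup'_le
    intro m hm
    simp only [Finset.mem_Icc] at hm
    by_cases hmj : m = j
    · subst hmj
      have hmin : min m T = m := min_eq_left hj
      rw [hmin]
      exact le_max_right _ _
    · have hm1 : j + 1 ≤ m := by omega
      set k := j + N - m with hk
      have hinv := inv (T - j) hi k (by omega) (by omega)
      rw [hTj] at hinv
      have heq : j + (N - k) = m := by omega
      rw [heq] at hinv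
      refine le_trans ?_ (le_max_left _ _)
      rw [← hinv]
      exact Finset.le_sup' (h (T - j)) (Finset.mem_Icc.mpr ⟨by omega, by omega⟩)
end

section
/- Let T ≥ 0, let ρ : {0,…,T} → ℝ be a finite real sequence, and let N ≥ 2 be the number of time steps contained in the interval [0,a] with a > 0. Define the stlcg recursion for ◊_{[a,∞)}: the hidden state is a pair h_i = (c_i, d_i) ∈ ℝ × ℝ^{N−1}, initialized with c₀ = ρ_T and every entry of d₀ equal to ρ_T; at step i the output is o_{T−i} = max(c_i, d_{i,1}), the next hidden state is c_{i+1} = o_{T−i} and d_{i+1} = (d_{i,2},…,d_{i,N−1}, ρ_{T−i}). Then for every index j with 0 ≤ j ≤ T, o_j = max_{min(j+N−1,T) ≤ k ≤ T} ρ_k, which is the robustness ρ(s_{t_j}, ◊_{[a,∞)} φ) under the convention that the trace is padded with its final value beyond index T. -/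
private lemma sup'_Icc_congr (T a b : ℕ) (h : a = b) (ha : a ≤ T) (ρ : ℕ → ℝ) :
    (Finset.Icc a T).sup' (Finset.nonempty_Icc.mpr ha) ρ
      = (Finset.Icc b T).sup' (Finset.nonempty_Icc.mpr (h ▸ ha)) ρ := by
  subst h; rfl

private lemma sup'_Icc_self (T : ℕ) (ρ : ℕ → ℝ) :
    (Finset.Icc T T).sup' (Finset.nonempty_Icc.mpr le_rfl) ρ = ρ T := by
  simp

private lemma sup'_Icc_rec (T m : ℕ) (h : m < T) (ρ : ℕ → ℝ) :
    (Finset.Icc m T).sup' (Finset.nonempty_Icc.mpr h.le) ρ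
      = max (ρ m) ((Finset.Icc (m+1) T).sup' (Finset.nonempty_Icc.mpr h) ρ) := by
  apply le_antisymm
  · apply Finset.sup'_le
    intro x hx
    rw [Finset.mem_Icc] at hx
    rcases eq_or_lt_of_le hx.1 with rfl | hlt
    · exact le_max_left _ _
    · exact le_max_of_le_right (Finset.le_sup' ρ (Finset.mem_Icc.mpr ⟨hlt, hx.2⟩))
  · apply max_le
    · exact Finset.le_sup' ρ (Finset.mem_Icc.mpr ⟨le_rfl, h.le⟩)
    · apply Finset.sup'_le
      intro x hx
      rw [Finset.mem_Icc] at hx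
      exact Finset.le_sup' ρ (Finset.mem_Icc.mpr ⟨by omega, hx.2⟩)

private lemma aux_step (T m : ℕ) (ρ : ℕ → ℝ) :
    max ((Finset.Icc (min (m+1) T) T).sup' (Finset.nonempty_Icc.mpr (Nat.min_le_right _ _)) ρ)
        (ρ (min m T))
      = (Finset.Icc (min m T) T).sup' (Finset.nonempty_Icc.mpr (Nat.min_le_right _ _)) ρ := by
  rcases lt_or_ge m T with h | h
  · have h1 : min m T = m := by omega
    have h2 : min (m+1) T = m + 1 := by omega
    rw [sup'_Icc_congr T (min (m+1) T) (m+1) h2 (Nat.min_le_right _ _) ρ,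
        sup'_Icc_congr T (min m T) m h1 (Nat.min_le_right _ _) ρ,
        show ρ (min m T) = ρ m from by rw [h1],
        sup'_Icc_rec T m h ρ, max_comm]
  · have h1 : min m T = T := by omega
    have h2 : min (m+1) T = T := by omega
    rw [sup'_Icc_congr T (min (m+1) T) T h2 (Nat.min_le_right _ _) ρ,
        sup'_Icc_congr T (min m T) T h1 (Nat.min_le_right _ _) ρ,
        show ρ (min m T) = ρ T from by rw [h1],
        sup'_Icc_self, max_self]


/-- Correctness of the `stlcg` recursion for `◊_{[a,∞)}` with `a > 0` and `N ≥ 2` time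
steps in `[0,a]`. The hidden state is a pair `(c i, d i)` where `d i` has entries indexed
`1,…,N-1`; it is initialized with `c 0 = ρ T` and every entry of `d 0` equal to `ρ T`. At
step `i` the output is `o (T-i) = max (c i) (d i 1)`, the next hidden state is
`c (i+1) = o (T-i)` and `d` is shifted with `ρ (T-i)` entering at the end. Then for every
`j ≤ T`, `o j = max_{min(j+N-1,T) ≤ k ≤ T} ρ k`, the robustness `ρ(s_{t_j}, ◊_{[a,∞)} φ)`
with last-value padding beyond index `T`. -/
theorem stlcg_eventually_lower_bounded (T N : ℕ) (hN : 2 ≤ N) (ρ o c : ℕ → ℝ)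
    (d : ℕ → ℕ → ℝ)
    (hc0 : c 0 = ρ T)
    (hd0 : ∀ k, 1 ≤ k → k ≤ N - 1 → d 0 k = ρ T)
    (hout : ∀ i, i ≤ T → o (T - i) = max (c i) (d i 1))
    (hc : ∀ i, i ≤ T → c (i + 1) = o (T - i))
    (hdshift : ∀ i, i ≤ T → ∀ k, 1 ≤ k → k ≤ N - 2 → d (i + 1) k = d i (k + 1))
    (hdlast : ∀ i, i ≤ T → d (i + 1) (N - 1) = ρ (T - i)) :
    ∀ j, j ≤ T →
      o j = (Finset.Icc (min (j + N - 1) T) T).sup'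
        (Finset.nonempty_Icc.mpr (Nat.min_le_right _ _)) ρ := by
  have key : ∀ i, i ≤ T →
      (c i = (Finset.Icc (min (T - i + N) T) T).sup'
          (Finset.nonempty_Icc.mpr (Nat.min_le_right _ _)) ρ)
      ∧ (∀ k, 1 ≤ k → k ≤ N - 1 → d i k = ρ (min (T - i + N - k) T)) := by
    intro i
    induction i with
    | zero =>
      intro _
      constructor
      · have h1 : min (T - 0 + N) T = T := by omega
        rw [hc0, sup'_Icc_congr T _ T h1 (Nat.min_le_right _ _) ρ, sup'_Icc_self]
      · intro k hk1 hk2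
        have h1 : min (T - 0 + N - k) T = T := by omega
        rw [hd0 k hk1 hk2, h1]
    | succ i ih =>
      intro hi1
      have hi : i ≤ T := by omega
      obtain ⟨ihc, ihd⟩ := ih hi
      have hout' : o (T - i) = (Finset.Icc (min (T - i + N - 1) T) T).sup'
          (Finset.nonempty_Icc.mpr (Nat.min_le_right _ _)) ρ := by
        rw [hout i hi, ihc, ihd 1 le_rfl (by omega)]
        have h1 : min (T - i + N) T = min ((T - i + N - 1) + 1) T := by omega
        rw [sup'_Icc_congr T _ _ h1 (Nat.min_le_right _ _) ρ]
        exact aux_step T (T - i + N - 1) ρ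
      constructor
      · rw [hc i hi, hout']
        exact sup'_Icc_congr T _ _ (by omega) (Nat.min_le_right _ _) ρ
      · intro k hk1 hk2
        rcases Nat.lt_or_ge k (N - 1) with hk | hk
        · have : d (i + 1) k = d i (k + 1) := hdshift i hi k hk1 (by omega)
          rw [this, ihd (k+1) (by omega) (by omega)]
          congr 1
          omega
        · have hkN : k = N - 1 := by omega
          subst hkN
          rw [hdlast i hi]
          congr 1
          omega
  intro j hj
  have hi : T - j ≤ T := Nat.sub_le _ _
  have hTi : T - (T - j) = j := by omega
  obtain ⟨kc, kd⟩ := key (T - j) hi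
  have := hout (T - j) hi
  rw [hTi] at this
  rw [this, kc, kd 1 le_rfl (by omega)]
  have h1 : min (T - (T - j) + N) T = min ((T - (T - j) + N - 1) + 1) T := by omega
  rw [sup'_Icc_congr T _ _ h1 (Nat.min_le_right _ _) ρ, aux_step T (T - (T - j) + N - 1) ρ]
  exact sup'_Icc_congr T _ _ (by omega) (Nat.min_le_right _ _) ρ
end

section
/- Let T ≥ 0, let ρ : {0,…,T} → ℝ be a finite real sequence, let N ≥ 2 be the number of time steps contained in the interval [0,b], and let M with 1 ≤ M ≤ N−1 be the number of time steps contained in the interval [a,b], where 0 < a ≤ b < ∞. Define the stlcg recursion for ◊_{[a,b]}: the hidden state h_i ∈ ℝ^{N−1} is initialized with every entry equal to ρ_T; at step i the output is o_{T−i} = max(h_{i,1},…,h_{i,M}), and the next hidden state is the shift h_{i+1} = (h_{i,2},…,h_{i,N−1}, ρ_{T−i}). Then for every index j with 0 ≤ j ≤ T, o_j = max_{j+N−M ≤ k ≤ j+N−1} ρ_{min(k,T)}, which is the robustness ρ(s_{t_j}, ◊_{[a,b]} φ) under the convention that the trace is padded with its final value beyond index T. -/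
/-- Correctness of the `stlcg` recursion for `◊_{[a,b]}` with `0 < a ≤ b < ∞`, where
`N ≥ 2` is the number of time steps in `[0,b]` and `1 ≤ M ≤ N-1` the number of time steps
in `[a,b]`. The hidden state `h i` has entries indexed `1,…,N-1`, initialized to `ρ T`;
at step `i` the output is `o (T-i) = max (h i 1, …, h i M)` and the hidden state is
shifted with `ρ (T-i)` entering at the end. Then for every `j ≤ T`,
`o j = max_{j+N-M ≤ k ≤ j+N-1} ρ (min k T)`, the robustness `ρ(s_{t_j}, ◊_{[a,b]} φ)`
with last-value padding beyond index `T`. -/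
theorem stlcg_eventually_interval (T N M : ℕ) (hN : 2 ≤ N) (hM : 1 ≤ M) (hMN : M ≤ N - 1)
    (ρ o : ℕ → ℝ) (h : ℕ → ℕ → ℝ)
    (hinit : ∀ k, 1 ≤ k → k ≤ N - 1 → h 0 k = ρ T)
    (hout : ∀ i, i ≤ T →
      o (T - i) = (Finset.Icc 1 M).sup' (Finset.nonempty_Icc.mpr hM) (h i))
    (hshift : ∀ i, i ≤ T → ∀ k, 1 ≤ k → k ≤ N - 2 → h (i + 1) k = h i (k + 1))
    (hlast : ∀ i, i ≤ T → h (i + 1) (N - 1) = ρ (T - i)) :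
    ∀ j, j ≤ T →
      o j = (Finset.Icc (j + N - M) (j + N - 1)).sup' (Finset.nonempty_Icc.mpr (by omega))
        (fun k => ρ (min k T)) := by

  have hform : ∀ i, i ≤ T → ∀ k, 1 ≤ k → k ≤ N - 1 →
      h i k = ρ (min (T - i + N - k) T) := by
    intro i
    induction i with
    | zero =>
      intro _ k hk1 hk2
      rw [hinit k hk1 hk2]
      congr 1
      omega
    | succ i ih =>
      intro hi k hk1 hk2
      rcases Nat.lt_or_ge k (N - 1) with hk | hk
      · rw [hshift i (by omega) k hk1 (by omega), ih (by omega) (k+1) (by omega) (by omega)]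
        congr 1
        omega
      · have : k = N - 1 := by omega
        subst this
        rw [hlast i (by omega)]
        congr 1
        omega
  intro j hj
  have hout' := hout (T - j) (by omega)
  rw [Nat.sub_sub_self hj] at hout'
  rw [hout']
  apply le_antisymm
  · apply Finset.sup'_le
    intro k hk
    rw [Finset.mem_Icc] at hk
    rw [hform (T - j) (by omega) k hk.1 (by omega)]
    have hmem : j + N - k ∈ Finset.Icc (j + N - M) (j + N - 1) := by
      rw [Finset.mem_Icc]; omega
    have := Finset.le_sup' (fun k => ρ (min k T)) hmem
    refine le_trans (le_of_eq ?_) this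
    congr 2
    omega
  · apply Finset.sup'_le
    intro k hk
    rw [Finset.mem_Icc] at hk
    have hmem : j + N - k ∈ Finset.Icc 1 M := by
      rw [Finset.mem_Icc]; omega
    have := Finset.le_sup' (h (T - j)) hmem
    refine le_trans (le_of_eq ?_) this
    rw [hform (T - j) (by omega) (j + N - k) (by omega) (by omega)]
    congr 2
    omega
end

section
/- Let T ≥ 0 and let f, g : {0,…,T} → ℝ be finite real sequences (the robustness traces of subformulas φ and ψ). For each index i define the Until robustness r_i = max_{i ≤ k ≤ T} min( g_k, min_{i ≤ j ≤ k} f_j ). Then r_T = min(g_T, f_T), and for every i < T the backward dynamic-programming recursion r_i = max( min(g_i, f_i), min(f_i, r_{i+1}) ) holds. -/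
private lemma sup'_set_congr {s t : Finset ℕ} (h : s = t) (hs : s.Nonempty) (f : ℕ → ℝ) :
    s.sup' hs f = t.sup' (h ▸ hs) f := by subst h; rfl

private lemma inf'_set_congr {s t : Finset ℕ} (h : s = t) (hs : s.Nonempty) (f : ℕ → ℝ) :
    s.inf' hs f = t.inf' (h ▸ hs) f := by subst h; rfl

/-- Backward dynamic-programming recursion for the unbounded Until operator. Given
robustness traces `f` (for `φ`) and `g` (for `ψ`) on indices `0,…,T`, and the Until
robustness `r i = max_{i ≤ k ≤ T} min (g k) (min_{i ≤ j ≤ k} f j)` (the inner minimum is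
over the window `[i, max i k]`, which equals `[i,k]` for every `k` in the outer range),
one has `r T = min (g T) (f T)` and, for every `i < T`,
`r i = max (min (g i) (f i)) (min (f i) (r (i+1)))`. -/
theorem stlcg_until_recursion (T : ℕ) (f g r : ℕ → ℝ)
    (hr : ∀ i, ∀ hi : i ≤ T,
      r i = (Finset.Icc i T).sup' (Finset.nonempty_Icc.mpr hi)
        (fun k => min (g k)
          ((Finset.Icc i (max i k)).inf' (Finset.nonempty_Icc.mpr (le_max_left i k)) f))) :
    r T = min (g T) (f T) ∧
      ∀ i, i < T → r i = max (min (g i) (f i)) (min (f i) (r (i + 1))) := by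
  constructor
  · rw [hr T le_rfl]
    simp [Finset.Icc_self]
  · intro i hi
    rw [hr i hi.le, hr (i+1) hi]
    have h1 : Finset.Icc i T = insert i (Finset.Icc (i+1) T) := by
      rw [Finset.Icc_add_one_left_eq_Ioc, Finset.Ioc_insert_left hi.le]
    have hne : (Finset.Icc (i+1) T).Nonempty := Finset.nonempty_Icc.mpr hi
    rw [sup'_set_congr h1, Finset.sup'_insert (H := hne)]
    congr 1
    · simp [Finset.Icc_self]
    · rw [Finset.sup'_inf_distrib_left]
      apply Finset.sup'_congr _ rfl
      intro k hk
      have hik : i + 1 ≤ k := (Finset.mem_Icc.mp hk).1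
      have hmax : max i k = k := max_eq_right (by omega)
      have hmax' : max (i+1) k = k := max_eq_right hik
      have h2 : Finset.Icc i k = insert i (Finset.Icc (i+1) k) := by
        rw [Finset.Icc_add_one_left_eq_Ioc, Finset.Ioc_insert_left (by omega)]
      have hne2 : (Finset.Icc (i+1) k).Nonempty := Finset.nonempty_Icc.mpr hik
      simp only [hmax, hmax']
      rw [inf'_set_congr h2, Finset.inf'_insert (H := hne2)]
      ac_rfl
end

section
/- Fix n, T ∈ ℕ and ρ_max > 0, and let STL formulas, Boolean semantics x,i ⊨ φ, and quantitative semantics ρ(x,i,φ) over signals x : {0,…,T} → ℝⁿ be as in the context. Then for every STL formula φ, every signal x, and every index 0 ≤ i ≤ T: if ρ(x,i,φ) > 0 then x,i ⊨ φ (positive robustness values indicate satisfaction). -/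
/-- STL formulas over signals in `ℝⁿ`, generated by
`φ ::= ⊤ | μ_c | ¬φ | φ ∧ ψ | φ U_{[a,b]} ψ` with `a ≤ b` natural numbers. -/
inductive STLFormula (n : ℕ) : Type where
  | top : STLFormula n
  | pred : ((Fin n → ℝ) → ℝ) → ℝ → STLFormula n
  | not : STLFormula n → STLFormula n
  | and : STLFormula n → STLFormula n → STLFormula n
  | until_ : (a b : ℕ) → a ≤ b → STLFormula n → STLFormula n → STLFormula n

/-- Boolean semantics `x,i ⊨ φ` of STL over a signal `x : {0,…,T} → ℝⁿ` (modeled as a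
function on `ℕ`), with window `W(i) = Icc (min (i+a) T) (min (i+b) T)`. -/
def STLSat {n : ℕ} (T : ℕ) (x : ℕ → Fin n → ℝ) : ℕ → STLFormula n → Prop
  | _, .top => True
  | i, .pred μ c => μ (x i) > c
  | i, .not φ => ¬ STLSat T x i φ
  | i, .and φ ψ => STLSat T x i φ ∧ STLSat T x i ψ
  | i, .until_ a b _ φ ψ =>
      ∃ k ∈ Finset.Icc (min (i + a) T) (min (i + b) T),
        STLSat T x k ψ ∧ ∀ j, i ≤ j → j ≤ k → STLSat T x j φ

/-- Quantitative semantics `ρ(x,i,φ)` of STL with top-robustness constant `ρmax`.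
The inner minimum over `i ≤ j ≤ k` is taken over `Icc i (max i k)`, which equals
`Icc i k` whenever `i ≤ k` (the only relevant case). -/
noncomputable def STLRob {n : ℕ} (T : ℕ) (ρmax : ℝ) (x : ℕ → Fin n → ℝ) :
    ℕ → STLFormula n → ℝ
  | _, .top => ρmax
  | i, .pred μ c => μ (x i) - c
  | i, .not φ => -(STLRob T ρmax x i φ)
  | i, .and φ ψ => min (STLRob T ρmax x i φ) (STLRob T ρmax x i ψ)
  | i, .until_ a b hab φ ψ =>
      (Finset.Icc (min (i + a) T) (min (i + b) T)).sup'
        (Finset.nonempty_Icc.mpr (min_le_min (Nat.add_le_add_left hab i) le_rfl))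
        (fun k => min (STLRob T ρmax x k ψ)
          ((Finset.Icc i (max i k)).inf' (Finset.nonempty_Icc.mpr (le_max_left i k))
            (fun j => STLRob T ρmax x j φ)))

lemma stl_aux {n T : ℕ} (ρmax : ℝ) (hρmax : 0 < ρmax) (φ : STLFormula n)
    (x : ℕ → Fin n → ℝ) :
    ∀ i, i ≤ T → (0 < STLRob T ρmax x i φ → STLSat T x i φ) ∧
      (STLSat T x i φ → 0 ≤ STLRob T ρmax x i φ) := by
  induction φ with
  | top =>
    intro i _
    exact ⟨fun _ => trivial, fun _ => le_of_lt hρmax⟩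
  | pred μ c =>
    intro i _
    constructor
    · intro h; simp only [STLSat]; simp only [STLRob] at h; linarith
    · intro h; simp only [STLSat] at h; simp only [STLRob]; linarith
  | not φ ih =>
    intro i hi
    constructor
    · intro h hsat
      simp only [STLRob] at h
      have := (ih i hi).2 hsat
      linarith
    · intro h
      simp only [STLSat] at h
      simp only [STLRob]
      by_contra hc
      push_neg at hc
      exact h ((ih i hi).1 (by linarith))
  | and φ ψ ihφ ihψ =>
    intro i hi
    constructor
    · intro h
      simp only [STLRob, lt_min_iff] at h
      exact ⟨(ihφ i hi).1 h.1, (ihψ i hi).1 h.2⟩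
    · intro h
      obtain ⟨h1, h2⟩ := h
      simp only [STLRob, le_min_iff]
      exact ⟨(ihφ i hi).2 h1, (ihψ i hi).2 h2⟩
  | until_ a b hab φ ψ ihφ ihψ =>
    intro i hi
    have hW : ∀ k ∈ Finset.Icc (min (i + a) T) (min (i + b) T), i ≤ k ∧ k ≤ T := by
      intro k hk
      rw [Finset.mem_Icc] at hk
      exact ⟨le_trans (le_min (Nat.le_add_right i a) hi) hk.1,
        le_trans hk.2 (min_le_right _ _)⟩
    constructor
    · intro h
      simp only [STLRob] at h
      rw [Finset.lt_sup'_iff] at h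
      obtain ⟨k, hk, hkpos⟩ := h
      rw [lt_min_iff] at hkpos
      obtain ⟨hik, hkT⟩ := hW k hk
      refine ⟨k, hk, (ihψ k hkT).1 hkpos.1, ?_⟩
      intro j hij hjk
      have hjmem : j ∈ Finset.Icc i (max i k) := by
        rw [Finset.mem_Icc]; exact ⟨hij, le_trans hjk (le_max_right i k)⟩
      have := lt_of_lt_of_le hkpos.2 (Finset.inf'_le _ hjmem)
      exact (ihφ j (le_trans hjk hkT)).1 this
    · intro h
      obtain ⟨k, hk, hψ, hφ⟩ := h
      obtain ⟨hik, hkT⟩ := hW k hk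
      simp only [STLRob]
      refine le_trans ?_ (Finset.le_sup' _ hk)
      rw [le_min_iff]
      refine ⟨(ihψ k hkT).2 hψ, ?_⟩
      rw [Finset.le_inf'_iff]
      intro j hj
      rw [Finset.mem_Icc, max_eq_right hik] at hj
      exact (ihφ j (le_trans hj.2 hkT)).2 (hφ j hj.1 hj.2)

/-- Soundness of the quantitative semantics: positive robustness values indicate
satisfaction. For every STL formula `φ`, signal `x`, and index `0 ≤ i ≤ T`, if
`ρ(x,i,φ) > 0` then `x,i ⊨ φ`. -/
theorem stl_positive_robustness_implies_sat {n T : ℕ} (ρmax : ℝ) (hρmax : 0 < ρmax)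
    (φ : STLFormula n) (x : ℕ → Fin n → ℝ) (i : ℕ) (hi : i ≤ T)
    (hpos : 0 < STLRob T ρmax x i φ) :
    STLSat T x i φ := by
  exact (stl_aux ρmax hρmax φ x i hi).1 hpos
end

section
/- Fix n, T ∈ ℕ and ρ_max > 0, and let STL formulas, Boolean semantics x,i ⊨ φ, and quantitative semantics ρ(x,i,φ) over signals x : {0,…,T} → ℝⁿ be as in the context. Then for every STL formula φ, every signal x, and every index 0 ≤ i ≤ T: if ρ(x,i,φ) < 0 then x,i does not satisfy φ (negative robustness values indicate violation); equivalently, if x,i ⊨ φ then ρ(x,i,φ) ≥ 0. -/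
lemma stl_key {n T : ℕ} (ρmax : ℝ) (hρmax : 0 < ρmax) (x : ℕ → Fin n → ℝ) :
    ∀ (φ : STLFormula n) (i : ℕ), i ≤ T →
      (0 < STLRob T ρmax x i φ → STLSat T x i φ) ∧
      (STLRob T ρmax x i φ < 0 → ¬ STLSat T x i φ) := by
  intro φ
  induction φ with
  | top =>
    intro i hi
    exact ⟨fun _ => trivial, fun h => absurd hρmax (by simpa [STLRob] using h.not_gt), ⟩
  | pred μ c =>
    intro i hi
    constructor
    · intro h; simp only [STLRob] at h; simp only [STLSat]; linarith
    · intro h hs; simp only [STLRob] at h; simp only [STLSat] at hs; linarith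
  | not φ ih =>
    intro i hi
    constructor
    · intro h
      simp only [STLRob] at h
      exact (ih i hi).2 (by linarith)
    · intro h hs
      simp only [STLRob] at h
      simp only [STLSat] at hs
      exact hs ((ih i hi).1 (by linarith))
  | and φ ψ ihφ ihψ =>
    intro i hi
    constructor
    · intro h
      simp only [STLRob, lt_min_iff] at h
      exact ⟨(ihφ i hi).1 h.1, (ihψ i hi).1 h.2⟩
    · intro h hs
      simp only [STLRob, min_lt_iff] at h
      rcases h with h | h
      · exact (ihφ i hi).2 h hs.1
      · exact (ihψ i hi).2 h hs.2
  | until_ a b hab φ ψ ihφ ihψ =>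
    intro i hi
    have hwin : ∀ k ∈ Finset.Icc (min (i + a) T) (min (i + b) T), i ≤ k ∧ k ≤ T := by
      intro k hk
      rw [Finset.mem_Icc] at hk
      exact ⟨le_trans (le_min (Nat.le_add_right i a) hi) hk.1,
        le_trans hk.2 (min_le_right _ _)⟩
    constructor
    · intro h
      simp only [STLRob] at h
      rw [Finset.lt_sup'_iff] at h
      obtain ⟨k, hk, hk2⟩ := h
      rw [lt_min_iff, Finset.lt_inf'_iff] at hk2
      obtain ⟨hik, hkT⟩ := hwin k hk
      refine ⟨k, hk, (ihψ k hkT).1 hk2.1, ?_⟩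
      intro j hij hjk
      have hj : j ∈ Finset.Icc i (max i k) := by
        rw [Finset.mem_Icc]; exact ⟨hij, le_trans hjk (le_max_right i k)⟩
      exact (ihφ j (le_trans hjk hkT)).1 (hk2.2 j hj)
    · intro h hs
      simp only [STLRob] at h
      obtain ⟨k, hk, hsψ, hsφ⟩ := hs
      obtain ⟨hik, hkT⟩ := hwin k hk
      have := (Finset.le_sup' (f := fun k => min (STLRob T ρmax x k ψ)
          ((Finset.Icc i (max i k)).inf' (Finset.nonempty_Icc.mpr (le_max_left i k))
            (fun j => STLRob T ρmax x j φ))) hk).trans_lt h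
      rw [min_lt_iff] at this
      rcases this with h' | h'
      · exact (ihψ k hkT).2 h' hsψ
      · rw [Finset.inf'_lt_iff] at h'
        obtain ⟨j, hj, hjneg⟩ := h'
        rw [Finset.mem_Icc, max_eq_right hik] at hj
        exact (ihφ j (hj.2.trans hkT)).2 hjneg (hsφ j hj.1 hj.2)

/-- Soundness of the quantitative semantics: negative robustness values indicate
violation. For every STL formula `φ`, signal `x`, and index `0 ≤ i ≤ T`, if
`ρ(x,i,φ) < 0` then `x,i ⊭ φ` (equivalently, satisfaction implies `ρ(x,i,φ) ≥ 0`). -/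
theorem stl_negative_robustness_implies_not_sat {n T : ℕ} (ρmax : ℝ) (hρmax : 0 < ρmax)
    (φ : STLFormula n) (x : ℕ → Fin n → ℝ) (i : ℕ) (hi : i ≤ T)
    (hneg : STLRob T ρmax x i φ < 0) :
    ¬ STLSat T x i φ := by
  exact (stl_key ρmax hρmax x φ i hi).2 hneg
end

section
/- Let n ≥ 1 and x ∈ ℝⁿ. Then the smooth minimum approaches the true minimum as the scaling parameter tends to infinity: lim_{w → ∞} ~min(x;w) = min_i x_i. -/
open Real Finset

/-- Smooth approximation of the max of the entries of `x ∈ ℝⁿ` with scaling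
parameter `w`: `~max(x;w) = (∑ i, x i * exp (w * x i)) / (∑ j, exp (w * x j))`. -/
noncomputable def smoothMax {n : ℕ} (x : Fin n → ℝ) (w : ℝ) : ℝ :=
  (∑ i, x i * Real.exp (w * x i)) / (∑ j, Real.exp (w * x j))

/-- Smooth approximation of the min of the entries of `x ∈ ℝⁿ` with scaling
parameter `w`: `~min(x;w) = (∑ i, x i * exp (−w * x i)) / (∑ j, exp (−w * x j))`. -/
noncomputable def smoothMin {n : ℕ} (x : Fin n → ℝ) (w : ℝ) : ℝ :=
  (∑ i, x i * Real.exp (-(w * x i))) / (∑ j, Real.exp (-(w * x j)))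

/-- The smooth minimum approaches the true minimum as the scaling parameter tends to
infinity: `lim_{w → ∞} ~min(x;w) = min_i x_i`. -/
theorem smoothMin_tendsto_min {n : ℕ} (hn : 1 ≤ n) (x : Fin n → ℝ) :
    Filter.Tendsto (fun w => smoothMin x w) Filter.atTop
      (nhds (Finset.univ.inf' ⟨⟨0, by omega⟩, Finset.mem_univ _⟩ x)) := by
  set m := Finset.univ.inf' ⟨⟨0, by omega⟩, Finset.mem_univ _⟩ x with hm
  -- limit of each shifted exponential
  have hterm : ∀ i : Fin n, Filter.Tendsto (fun w => Real.exp (-(w * (x i - m))))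
      Filter.atTop (nhds (if x i = m then 1 else 0)) := by
    intro i
    by_cases h : x i = m
    · simp [h]
    · have hle : m ≤ x i := Finset.inf'_le _ (Finset.mem_univ i)
      have hlt : 0 < x i - m := by
        have : m < x i := lt_of_le_of_ne hle (Ne.symm h)
        linarith
      simp only [if_neg h]
      refine Real.tendsto_exp_atBot.comp ?_
      have h1 : Filter.Tendsto (fun w : ℝ => w * (x i - m)) Filter.atTop Filter.atTop :=
        Filter.Tendsto.atTop_mul_const hlt Filter.tendsto_id
      exact Filter.tendsto_neg_atBot_iff.mpr h1
  have hnum : Filter.Tendsto (fun w => ∑ i, x i * Real.exp (-(w * (x i - m))))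
      Filter.atTop (nhds (∑ i, x i * (if x i = m then 1 else 0))) :=
    tendsto_finset_sum _ fun i _ => tendsto_const_nhds.mul (hterm i)
  have hden : Filter.Tendsto (fun w => ∑ i, Real.exp (-(w * (x i - m))))
      Filter.atTop (nhds (∑ i, (if x i = m then 1 else 0))) :=
    tendsto_finset_sum _ fun i _ => hterm i
  -- the limits of numerator and denominator
  set k : ℕ := (Finset.univ.filter fun i => x i = m).card with hk
  have hdenval : (∑ i, (if x i = m then (1:ℝ) else 0)) = (k : ℝ) := by
    rw [← Finset.sum_filter, Finset.sum_const, hk]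
    simp
  have hnumval : (∑ i, x i * (if x i = m then (1:ℝ) else 0)) = m * (k : ℝ) := by
    have : ∀ i : Fin n, x i * (if x i = m then (1:ℝ) else 0)
        = (if x i = m then m else 0) := by
      intro i; by_cases h : x i = m <;> simp [h]
    rw [Finset.sum_congr rfl fun i _ => this i, ← Finset.sum_filter,
      Finset.sum_const, hk, nsmul_eq_mul, mul_comm]
  have hkpos : 0 < k := by
    obtain ⟨i, _, hi⟩ := Finset.exists_mem_eq_inf' ⟨⟨0, by omega⟩, Finset.mem_univ _⟩ x
    refine Finset.card_pos.mpr ⟨i, ?_⟩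
    simp [hi.symm, ← hm]
  have hkne : (k : ℝ) ≠ 0 := Nat.cast_ne_zero.mpr hkpos.ne'
  have key : Filter.Tendsto (fun w => (∑ i, x i * Real.exp (-(w * (x i - m)))) /
      (∑ i, Real.exp (-(w * (x i - m))))) Filter.atTop (nhds m) := by
    have := hnum.div hden (by rw [hdenval]; exact hkne)
    rw [hnumval, hdenval, mul_div_assoc, div_self hkne, mul_one] at this
    exact this
  refine key.congr fun w => ?_
  unfold smoothMin
  have hrw : ∀ i : Fin n, Real.exp (-(w * x i))
      = Real.exp (-(w * m)) * Real.exp (-(w * (x i - m))) := by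
    intro i; rw [← Real.exp_add]; ring_nf
  simp only [hrw]
  rw [show (∑ i, x i * (Real.exp (-(w * m)) * Real.exp (-(w * (x i - m)))))
      = Real.exp (-(w * m)) * ∑ i, x i * Real.exp (-(w * (x i - m))) by
        rw [Finset.mul_sum]; exact Finset.sum_congr rfl fun i _ => by ring,
    ← Finset.mul_sum, mul_div_mul_left _ _ (Real.exp_ne_zero _)]
end
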